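/- Let F be a specification with n outputs and m inputs, and let F̂ be a positive form of F such that F is in SynNNF w.r.t. F̂. Then the GACKS function vector Ψ associated with F̂ is a Skolem function vector for the outputs in F. -/
import Mathlib


/-- Positive-unateness (monotonicity) of `Fh` in every coordinate of its first two
arguments: changing any coordinate of `X` or `Xb` to `true` cannot change the
value of `Fh` from `true` to `false`. -/
def MonoPos {n m : ℕ} (Fh : (Fin n → Bool) → (Fin n → Bool) → (Fin m → Bool) → Bool) : Prop :=
  ∀ (X Xb : Fin n → Bool) (Y : Fin m → Bool) (i : Fin n),
    (Fh X Xb Y = true → Fh (Function.update X i true) Xb Y = true) ∧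
    (Fh X Xb Y = true → Fh X (Function.update Xb i true) Y = true)

/-- `Fh` is a positive form of the specification `F`. -/
def PosForm {n m : ℕ} (F : (Fin n → Bool) → (Fin m → Bool) → Bool)
    (Fh : (Fin n → Bool) → (Fin n → Bool) → (Fin m → Bool) → Bool) : Prop :=
  MonoPos Fh ∧ ∀ X Y, Fh X (fun j => !(X j)) Y = F X Y

/-- The function `αᵢ^{jk}` associated with the positive form `Fh`. -/
def alpha {n m : ℕ} (Fh : (Fin n → Bool) → (Fin n → Bool) → (Fin m → Bool) → Bool)
    (i : Fin n) (j k : Bool) (X : Fin n → Bool) (Y : Fin m → Bool) : Bool :=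
  Fh (fun ℓ => if ℓ < i then true else if ℓ = i then j else X ℓ)
     (fun ℓ => if ℓ < i then true else if ℓ = i then k else !(X ℓ)) Y

/-- `F` is in SynNNF w.r.t. `Fh`: for every `i`, the `i`-th reduct is ∧ᵢ-unrealizable. -/
def SynNNF {n m : ℕ} (Fh : (Fin n → Bool) → (Fin n → Bool) → (Fin m → Bool) → Bool) : Prop :=
  ∀ (i : Fin n) (X : Fin n → Bool) (Y : Fin m → Bool),
    alpha Fh i true true X Y = true →
      (alpha Fh i true false X Y = true ∨ alpha Fh i false true X Y = true)

/-- The GACKS function vector associated with `Fh`, defined by downward recursion: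
`Ψ Y i = αᵢ^{10}` applied to the already-computed Skolem values of coordinates `ℓ > i`. -/
def gacks {n m : ℕ} (Fh : (Fin n → Bool) → (Fin n → Bool) → (Fin m → Bool) → Bool)
    (Y : Fin m → Bool) : Fin n → Bool
  | i => alpha Fh i true false (fun ℓ => if _h : i < ℓ then gacks Fh Y ℓ else true) Y
  termination_by i => n - i.val
  decreasing_by exact Nat.sub_lt_sub_left i.isLt _h

-- auxiliary lemmas

lemma raise1 {n m : ℕ} {Fh : (Fin n → Bool) → (Fin n → Bool) → (Fin m → Bool) → Bool}
    (h : MonoPos Fh) (X Xb : Fin n → Bool) (Y : Fin m → Bool) (s : Finset (Fin n))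
    (hF : Fh X Xb Y = true) :
    Fh (fun ℓ => if ℓ ∈ s then true else X ℓ) Xb Y = true := by
  induction s using Finset.induction with
  | empty => simpa using hF
  | @insert a s ha ih =>
    have key : (fun ℓ => if ℓ ∈ insert a s then true else X ℓ)
        = Function.update (fun ℓ => if ℓ ∈ s then true else X ℓ) a true := by
      funext ℓ
      by_cases hl : ℓ = a <;> simp [Function.update, hl]
    rw [key]
    exact (h _ Xb Y a).1 ih

lemma raise2 {n m : ℕ} {Fh : (Fin n → Bool) → (Fin n → Bool) → (Fin m → Bool) → Bool}
    (h : MonoPos Fh) (X Xb : Fin n → Bool) (Y : Fin m → Bool) (s : Finset (Fin n))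
    (hF : Fh X Xb Y = true) :
    Fh X (fun ℓ => if ℓ ∈ s then true else Xb ℓ) Y = true := by
  induction s using Finset.induction with
  | empty => simpa using hF
  | @insert a s ha ih =>
    have key : (fun ℓ => if ℓ ∈ insert a s then true else Xb ℓ)
        = Function.update (fun ℓ => if ℓ ∈ s then true else Xb ℓ) a true := by
      funext ℓ
      by_cases hl : ℓ = a <;> simp [Function.update, hl]
    rw [key]
    exact (h X _ Y a).2 ih

lemma mono_le {n m : ℕ} {Fh : (Fin n → Bool) → (Fin n → Bool) → (Fin m → Bool) → Bool}
    (h : MonoPos Fh) {X X' Xb Xb' : Fin n → Bool} {Y : Fin m → Bool}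
    (hX : ∀ ℓ, X ℓ = true → X' ℓ = true) (hXb : ∀ ℓ, Xb ℓ = true → Xb' ℓ = true)
    (hF : Fh X Xb Y = true) : Fh X' Xb' Y = true := by
  have h1 : X' = fun ℓ => if ℓ ∈ Finset.univ.filter (fun ℓ => X' ℓ = true) then true else X ℓ := by
    funext ℓ
    by_cases hl : X' ℓ = true
    · simp [hl]
    · simp only [Finset.mem_filter, Finset.mem_univ, true_and, hl, if_false]
      cases hXl : X ℓ
      · rfl
      · exact absurd (hX ℓ hXl) hl
  have h2 : Xb' = fun ℓ => if ℓ ∈ Finset.univ.filter (fun ℓ => Xb' ℓ = true) then true else Xb ℓ := by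
    funext ℓ
    by_cases hl : Xb' ℓ = true
    · simp [hl]
    · simp only [Finset.mem_filter, Finset.mem_univ, true_and, hl, if_false]
      cases hXl : Xb ℓ
      · rfl
      · exact absurd (hXb ℓ hXl) hl
  rw [h1, h2]
  exact raise2 h _ _ _ _ (raise1 h _ _ _ _ hF)

lemma alpha_congr {n m : ℕ} (Fh : (Fin n → Bool) → (Fin n → Bool) → (Fin m → Bool) → Bool)
    (i : Fin n) (j k : Bool) {X X' : Fin n → Bool} (Y : Fin m → Bool)
    (hX : ∀ ℓ, i < ℓ → X ℓ = X' ℓ) :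
    alpha Fh i j k X Y = alpha Fh i j k X' Y := by
  unfold alpha
  congr 2 <;>
  · funext ℓ
    by_cases h1 : ℓ < i
    · rw [if_pos h1, if_pos h1]
    · by_cases h2 : ℓ = i
      · rw [if_neg h1, if_neg h1, if_pos h2, if_pos h2]
      · have h3 : i < ℓ := lt_of_le_of_ne (not_lt.mp h1) (Ne.symm h2)
        rw [if_neg h1, if_neg h1, if_neg h2, if_neg h2, hX ℓ h3]

/-- Rewriting a "threshold" vector into the `alpha` format at coordinate `i`. -/
lemma cut {n : ℕ} (i : Fin n) (g : Fin n → Bool) (t : ℕ) (b : Bool)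
    (hlow : ∀ ℓ : Fin n, ℓ < i → ℓ.val < t)
    (hhigh : ∀ ℓ : Fin n, i < ℓ → ¬ ℓ.val < t)
    (hb : (if i.val < t then true else g i) = b) :
    (fun ℓ => if ℓ.val < t then true else g ℓ)
    = fun ℓ => if ℓ < i then true else if ℓ = i then b else g ℓ := by
  funext ℓ
  by_cases h1 : ℓ < i
  · rw [if_pos (hlow ℓ h1), if_pos h1]
  by_cases h2 : ℓ = i
  · rw [if_neg h1, if_pos h2, ← hb, h2]
  · have h3 : i < ℓ := lt_of_le_of_ne (not_lt.mp h1) (Ne.symm h2)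
    rw [if_neg (hhigh ℓ h3), if_neg h1, if_neg h2]

/-- If `F` is in SynNNF w.r.t. its positive form `Fh`, then the GACKS function
vector is a Skolem function vector for the outputs in `F`. -/
theorem synnnf_gacks_is_skolem {n m : ℕ}
    (F : (Fin n → Bool) → (Fin m → Bool) → Bool)
    (Fh : (Fin n → Bool) → (Fin n → Bool) → (Fin m → Bool) → Bool)
    (hpos : PosForm F Fh) (hsyn : SynNNF Fh) :
    ∀ Y : Fin m → Bool, (∃ X, F X Y = true) → F (gacks Fh Y) Y = true := by
  intro Y ⟨X, hX⟩
  obtain ⟨hmono, hneg⟩ := hpos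
  set Ψ := gacks Fh Y with hΨ
  have hΨi : ∀ i : Fin n, Ψ i = alpha Fh i true false Ψ Y := by
    intro i
    rw [hΨ, gacks]
    exact alpha_congr Fh i true false Y (fun ℓ hl => by simp [hl])
  have claim : ∀ d : ℕ,
      Fh (fun ℓ => if ℓ.val < n - d then true else Ψ ℓ)
         (fun ℓ => if ℓ.val < n - d then true else !(Ψ ℓ)) Y = true := by
    intro d
    induction d with
    | zero =>
      exact mono_le hmono
        (fun ℓ _ => by simp [ℓ.isLt]) (fun ℓ _ => by simp [ℓ.isLt])
        ((hneg X Y).symm ▸ hX)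
    | succ d ih =>
      by_cases hd : n - d = n - (d + 1)
      · rwa [hd] at ih
      · have hlt : n - (d + 1) < n := by omega
        set i : Fin n := ⟨n - (d + 1), hlt⟩ with hi
        have hiv : i.val = n - (d + 1) := rfl
        have hsd : n - d = i.val + 1 := by rw [hiv]; omega
        have hlow1 : ∀ ℓ : Fin n, ℓ < i → ℓ.val < n - d := by
          intro ℓ hl; have := Fin.lt_def.mp hl; omega
        have hhigh1 : ∀ ℓ : Fin n, i < ℓ → ¬ ℓ.val < n - d := by
          intro ℓ hl; have := Fin.lt_def.mp hl; omega
        have hbt : (if i.val < n - d then true else Ψ i) = true := by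
          rw [if_pos (by omega)]
        have hbt' : (if i.val < n - d then true else !(Ψ i)) = true := by
          rw [if_pos (by omega)]
        have e1 : (fun ℓ : Fin n => if ℓ.val < n - d then true else Ψ ℓ)
            = fun ℓ => if ℓ < i then true else if ℓ = i then true else Ψ ℓ :=
          cut i Ψ (n - d) true hlow1 hhigh1 hbt
        have e2 : (fun ℓ : Fin n => if ℓ.val < n - d then true else !(Ψ ℓ))
            = fun ℓ => if ℓ < i then true else if ℓ = i then true else !(Ψ ℓ) :=
          cut i (fun ℓ => !(Ψ ℓ)) (n - d) true hlow1 hhigh1 hbt'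
        rw [e1, e2] at ih
        have h11 : alpha Fh i true true Ψ Y = true := ih
        -- now the goal side
        have hlow2 : ∀ ℓ : Fin n, ℓ < i → ℓ.val < n - (d + 1) := by
          intro ℓ hl; have := Fin.lt_def.mp hl; omega
        have hhigh2 : ∀ ℓ : Fin n, i < ℓ → ¬ ℓ.val < n - (d + 1) := by
          intro ℓ hl; have := Fin.lt_def.mp hl; omega
        have hni : ¬ (i.val < n - (d + 1)) := by omega
        have goal_of : ∀ b : Bool, Ψ i = b → alpha Fh i b (!b) Ψ Y = true →
            Fh (fun ℓ => if ℓ.val < n - (d + 1) then true else Ψ ℓ)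
               (fun ℓ => if ℓ.val < n - (d + 1) then true else !(Ψ ℓ)) Y = true := by
          intro b hb hα
          have f1 : (fun ℓ : Fin n => if ℓ.val < n - (d + 1) then true else Ψ ℓ)
              = fun ℓ => if ℓ < i then true else if ℓ = i then b else Ψ ℓ :=
            cut i Ψ (n - (d + 1)) b hlow2 hhigh2 (by rw [if_neg hni]; exact hb)
          have f2 : (fun ℓ : Fin n => if ℓ.val < n - (d + 1) then true else !(Ψ ℓ))
              = fun ℓ => if ℓ < i then true else if ℓ = i then !b else !(Ψ ℓ) :=
            cut i (fun ℓ => !(Ψ ℓ)) (n - (d + 1)) (!b) hlow2 hhigh2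
              (by rw [if_neg hni]; exact congrArg (fun x => !x) hb)
          rw [f1, f2]
          exact hα
        cases hb : Ψ i with
        | true =>
          have h10 : alpha Fh i true false Ψ Y = true := by rw [← hΨi i]; exact hb
          exact goal_of true hb h10
        | false =>
          have h10 : alpha Fh i true false Ψ Y = false := by rw [← hΨi i]; exact hb
          rcases hsyn i Ψ Y h11 with h | h
          · rw [h] at h10; exact absurd h10 (by simp)
          · exact goal_of false hb h
  have hfin := claim n
  rw [Nat.sub_self] at hfin
  have e1 : (fun ℓ : Fin n => if ℓ.val < 0 then true else Ψ ℓ) = Ψ := by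
    funext ℓ; simp
  have e2 : (fun ℓ : Fin n => if ℓ.val < 0 then true else !(Ψ ℓ)) = fun j => !(Ψ j) := by
    funext ℓ; simp
  rw [e1, e2] at hfin
  rw [← hneg Ψ Y]
  exact hfin
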